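/- arXiv:2601.06523 — 2 statements merged into one kernel-verified Lean document; each statement's English description precedes it below -/
import Mathlib

section
/- Let f : X → X be a homeomorphism of a compact connected metric space and C a terminal chain component of f with C ≠ X, and suppose f has shadowing on B_b(C) for some b > 0. Then for every a > 0 there exists a terminal chain component D of f with empty interior and D ⊆ B_a(C). -/
open Metric Filter Topology Set

variable {X : Type*}

/-- `(c i)_{i=0}^k` is a `δ`-chain of `f` (up to index `k`). -/
def IsDeltaChain [MetricSpace X] (f : X → X) (δ : ℝ) (k : ℕ) (c : ℕ → X) : Prop :=
  ∀ i < k, dist (f (c i)) (c (i + 1)) ≤ δ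

/-- `x → y` : for every `δ > 0` there is a `δ`-chain from `x` to `y`. -/
def ChainReach [MetricSpace X] (f : X → X) (x y : X) : Prop :=
  ∀ δ > 0, ∃ k ≥ 1, ∃ c : ℕ → X, c 0 = x ∧ c k = y ∧ IsDeltaChain f δ k c

/-- The chain recurrent set. -/
def ChainRec [MetricSpace X] (f : X → X) : Set X := {x | ChainReach f x x}

/-- `C` is a chain component of `f`. -/
def IsChainComponent [MetricSpace X] (f : X → X) (C : Set X) : Prop :=
  ∃ x, ChainReach f x x ∧
    C = {y | ChainReach f y y ∧ ChainReach f x y ∧ ChainReach f y x}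

/-- A set is chain stable iff points chain-reachable from it stay in it. -/
def ChainStable [MetricSpace X] (f : X → X) (S : Set X) : Prop :=
  ∀ x ∈ S, ∀ y, ChainReach f x y → y ∈ S

/-- `S` is "initially stable": if `y → x` with `x ∈ S` then `y ∈ S`. -/
def InitialStable [MetricSpace X] (f : X → X) (S : Set X) : Prop :=
  ∀ x ∈ S, ∀ y, ChainReach f y x → y ∈ S

/-- `f` restricted to `Λ` is chain transitive. -/
def ChainTransitiveOn [MetricSpace X] (f : X → X) (Λ : Set X) : Prop :=
  ∀ p ∈ Λ, ∀ q ∈ Λ, ∀ δ > 0, ∃ k ≥ 1, ∃ c : ℕ → X,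
    c 0 = p ∧ c k = q ∧ (∀ i ≤ k, c i ∈ Λ) ∧ IsDeltaChain f δ k c

/-- `f` has shadowing on `S`. -/
def ShadowsOn [MetricSpace X] (f : X → X) (S : Set X) : Prop :=
  ∀ ε > 0, ∃ δ > 0, ∀ (k : ℕ) (c : ℕ → X), (∀ i ≤ k, c i ∈ S) →
    IsDeltaChain f δ k c → ∃ x, ∀ i ≤ k, dist (c i) (f^[i] x) ≤ ε

/-- Iterate of a homeomorphism indexed by `ℤ`. -/
def hIter [TopologicalSpace X] (f : X ≃ₜ X) (i : ℤ) : X → X :=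
  if 0 ≤ i then (⇑f)^[i.toNat] else (⇑f.symm)^[(-i).toNat]

/-- A `δ`-limit-pseudo orbit of the homeomorphism `f`. -/
def IsLimitPseudoOrbit [MetricSpace X] (f : X ≃ₜ X) (δ : ℝ) (ξ : ℤ → X) : Prop :=
  (∀ i : ℤ, dist (f (ξ i)) (ξ (i + 1)) ≤ δ) ∧
  Tendsto (fun i : ℤ => dist (f (ξ i)) (ξ (i + 1))) atBot (nhds 0) ∧
  Tendsto (fun i : ℤ => dist (f (ξ i)) (ξ (i + 1))) atTop (nhds 0)

/-- `f` has L-shadowing on `S`. -/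
def LShadowsOn [MetricSpace X] (f : X ≃ₜ X) (S : Set X) : Prop :=
  ∀ ε > 0, ∃ δ > 0, ∀ ξ : ℤ → X, (∀ i : ℤ, ξ i ∈ S) →
    IsLimitPseudoOrbit f δ ξ →
    ∃ x : X, (∀ i : ℤ, dist (ξ i) (hIter f i x) ≤ ε) ∧
      Tendsto (fun i : ℤ => dist (ξ i) (hIter f i x)) atBot (nhds 0) ∧
      Tendsto (fun i : ℤ => dist (ξ i) (hIter f i x)) atTop (nhds 0)

/-- `f` is expansive on `S`. -/
def ExpansiveOn [MetricSpace X] (f : X ≃ₜ X) (S : Set X) : Prop :=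
  ∃ e > 0, ∀ x y : X, (∀ i : ℤ, hIter f i x ∈ S) → (∀ i : ℤ, hIter f i y ∈ S) →
    (∀ i : ℤ, dist (hIter f i x) (hIter f i y) ≤ e) → x = y

/-- Closed `b`-neighborhood of `S`. -/
def Nbhd [MetricSpace X] (b : ℝ) (S : Set X) : Set X := {x | Metric.infDist x S ≤ b}

/-- Attractor for a continuous map `f`. -/
def IsAttractor [TopologicalSpace X] (f : X → X) (Λ : Set X) : Prop :=
  IsClosed Λ ∧ f '' Λ = Λ ∧
    ∃ U : Set X, IsOpen U ∧ f '' closure U ⊆ U ∧ Λ = ⋂ i : ℕ, f^[i] '' U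

/-- `f` is (topologically) mixing. -/
def IsMixing [TopologicalSpace X] (f : X → X) : Prop :=
  ∀ U V : Set X, IsOpen U → IsOpen V → U.Nonempty → V.Nonempty →
    ∃ j : ℕ, ∀ i ≥ j, (f^[i] '' U ∩ V).Nonempty

/-- The ω-limit set of `x` under `f`. -/
def OmegaSet [TopologicalSpace X] (f : X → X) (x : X) : Set X :=
  {y | ∃ φ : ℕ → ℕ, StrictMono φ ∧ Tendsto (fun j => f^[φ j] x) atTop (nhds y)}

/-- `M` is a minimal set for `f`. -/
def IsMinimalSet [TopologicalSpace X] (f : X → X) (M : Set X) : Prop :=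
  M.Nonempty ∧ IsClosed M ∧ f '' M ⊆ M ∧ ∀ x ∈ M, OmegaSet f x = M


/-
A terminal chain component is the set `C = {y | x₀ → y}` of points chain reachable from one of its
points, and for small `δ` the points `δ`-chain reachable from `x₀` lie in any given neighbourhood of
`C`; a thickening of their image is then a trapping region `V`, with attractor
`A = ⋂ₙ fⁿ(closure V)` near `C`. The frontier of `A` is chain stable: a chain from `x ∈ ∂A` can be
restarted at a nearby `x' ∉ A`, whose backward orbit leaves `f(V)` before leaving `V`; prefixing
that backward orbit and shadowing the result gives an orbit outside `A` ending next to the endpoint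
of the chain. As `X` is connected and `∅ ≠ A ≠ X`, the frontier is a nonempty closed chain stable
set, so it contains a terminal chain component, which has empty interior since `∂A` does.
-/

section Chains

variable {k l : ℕ} {c d : ℕ → X}

def chainAppend (k : ℕ) (c d : ℕ → X) : ℕ → X := fun i => if i ≤ k then c i else d (i - k)

lemma chainAppend_of_le {i : ℕ} (hi : i ≤ k) : chainAppend k c d i = c i := if_pos hi

lemma chainAppend_of_ge (h : c k = d 0) {i : ℕ} (hi : k ≤ i) :
    chainAppend k c d i = d (i - k) := by
  unfold chainAppend
  split_ifs with hik
  · rw [le_antisymm hik hi, Nat.sub_self, h]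
  · rfl

variable [MetricSpace X] {F : X → X} {δ δ' : ℝ} {x y z w : X}

lemma IsDeltaChain.mono (h : δ ≤ δ') (hc : IsDeltaChain F δ k c) : IsDeltaChain F δ' k c :=
  fun i hi => (hc i hi).trans h

lemma isDeltaChain_iterate (hδ : 0 ≤ δ) (k : ℕ) (x : X) :
    IsDeltaChain F δ k (fun i => F^[i] x) := by
  intro i _
  show dist (F (F^[i] x)) (F^[i + 1] x) ≤ δ
  rw [Function.iterate_succ_apply', dist_self]
  exact hδ

lemma IsDeltaChain.append (hc : IsDeltaChain F δ k c) (hd : IsDeltaChain F δ l d)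
    (h : c k = d 0) : IsDeltaChain F δ (k + l) (chainAppend k c d) := by
  intro i hi
  rcases lt_or_ge i k with hik | hki
  · rw [chainAppend_of_le hik.le, chainAppend_of_le hik]
    exact hc i hik
  · rw [chainAppend_of_ge h hki, chainAppend_of_ge h (by omega),
      show i + 1 - k = i - k + 1 by omega]
    exact hd _ (by omega)

lemma IsDeltaChain.update_zero (hc : IsDeltaChain F δ k c) (h : dist (F x) (F (c 0)) ≤ δ') :
    IsDeltaChain F (δ + δ') k (Function.update c 0 x) := by
  have hδ' : 0 ≤ δ' := dist_nonneg.trans h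
  intro i hi
  rw [Function.update_of_ne (Nat.succ_ne_zero i)]
  rcases Nat.eq_zero_or_pos i with rfl | hi0
  · rw [Function.update_self]
    calc dist (F x) (c 1) ≤ dist (F x) (F (c 0)) + dist (F (c 0)) (c 1) := dist_triangle _ _ _
      _ ≤ δ + δ' := by linarith [hc 0 hi]
  · rw [Function.update_of_ne hi0.ne']
    linarith [hc i hi]

lemma IsDeltaChain.update_last (hc : IsDeltaChain F δ k c) (h : dist (c k) y ≤ δ') :
    IsDeltaChain F (δ + δ') k (Function.update c k y) := by
  have hδ' : 0 ≤ δ' := dist_nonneg.trans h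
  intro i hi
  rw [Function.update_of_ne hi.ne]
  rcases eq_or_ne (i + 1) k with rfl | hik
  · rw [Function.update_self]
    calc dist (F (c i)) y ≤ dist (F (c i)) (c (i + 1)) + dist (c (i + 1)) y := dist_triangle _ _ _
      _ ≤ δ + δ' := by linarith [hc i hi]
  · rw [Function.update_of_ne hik]
    linarith [hc i hi]

variable (F) in
def deltaReachSet (δ : ℝ) (x : X) : Set X :=
  {y | ∃ k ≥ 1, ∃ c : ℕ → X, c 0 = x ∧ c k = y ∧ IsDeltaChain F δ k c}

lemma deltaReachSet_mono (h : δ ≤ δ') : deltaReachSet F δ x ⊆ deltaReachSet F δ' x :=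
  fun _ ⟨k, hk, c, hc0, hck, hc⟩ => ⟨k, hk, c, hc0, hck, hc.mono h⟩

lemma apply_mem_deltaReachSet (hδ : 0 ≤ δ) : F x ∈ deltaReachSet F δ x :=
  ⟨1, le_rfl, fun i => F^[i] x, rfl, rfl, isDeltaChain_iterate hδ 1 x⟩

lemma deltaReachSet_trans (hy : y ∈ deltaReachSet F δ x) (hz : z ∈ deltaReachSet F δ y) :
    z ∈ deltaReachSet F δ x := by
  obtain ⟨k, hk, c, hc0, hck, hc⟩ := hy
  obtain ⟨l, hl, d, hd0, hdl, hd⟩ := hz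
  have hcd : c k = d 0 := hck.trans hd0.symm
  refine ⟨k + l, by omega, chainAppend k c d, ?_, ?_, hc.append hd hcd⟩
  · rw [chainAppend_of_le (Nat.zero_le k), hc0]
  · rw [chainAppend_of_ge hcd (by omega), Nat.add_sub_cancel_left, hdl]

lemma mem_deltaReachSet_of_dist_le (hy : y ∈ deltaReachSet F δ x) (h : dist (F y) w ≤ δ) :
    w ∈ deltaReachSet F δ x := by
  refine deltaReachSet_trans hy ⟨1, le_rfl, fun i => if i = 0 then y else w, rfl, rfl, ?_⟩
  intro i hi
  obtain rfl : i = 0 := by omega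
  exact h

lemma thickening_image_deltaReachSet_subset :
    thickening δ (F '' deltaReachSet F δ x) ⊆ deltaReachSet F δ x := by
  intro w hw
  obtain ⟨_, ⟨y, hy, rfl⟩, hdist⟩ := mem_thickening_iff.mp hw
  exact mem_deltaReachSet_of_dist_le hy (by rw [dist_comm]; exact hdist.le)

lemma closure_deltaReachSet_subset (h : δ < δ') :
    closure (deltaReachSet F δ x) ⊆ deltaReachSet F δ' x := by
  intro y hy
  obtain ⟨y', ⟨k, hk, c, hc0, hck, hc⟩, hyy'⟩ :=
    Metric.mem_closure_iff.mp hy (δ' - δ) (sub_pos.mpr h)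
  refine ⟨k, hk, Function.update c k y, ?_, Function.update_self _ _ _, ?_⟩
  · rwa [Function.update_of_ne (by omega)]
  · refine (hc.update_last (δ' := δ' - δ) ?_).mono (by linarith)
    rw [hck, dist_comm]
    exact hyy'.le

lemma ChainReach.trans (hxy : ChainReach F x y) (hyz : ChainReach F y z) : ChainReach F x z :=
  fun δ hδ => deltaReachSet_trans (hxy δ hδ) (hyz δ hδ)

lemma chainReach_apply : ChainReach F x (F x) :=
  fun _ hδ => apply_mem_deltaReachSet hδ.le

lemma isClosed_setOf_chainReach (F : X → X) (x : X) : IsClosed {y | ChainReach F x y} := by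
  refine isClosed_of_closure_subset fun y hy δ hδ => ?_
  refine closure_deltaReachSet_subset (half_lt_self hδ) (closure_mono (fun y' hy' => ?_) hy)
  exact hy' (δ / 2) (half_pos hδ)

lemma chainStable_setOf_chainReach (F : X → X) (x : X) : ChainStable F {y | ChainReach F x y} :=
  fun _ hy _ hz => ChainReach.trans hy hz

lemma IsChainComponent.eq_setOf_chainReach {C : Set X} (hC : IsChainComponent F C)
    (hter : ChainStable F C) : ∃ x, C = {y | ChainReach F x y} := by
  obtain ⟨x, hx, rfl⟩ := hC
  exact ⟨x, Subset.antisymm (fun y hy => hy.2.1) (fun y hy => hter x ⟨hx, hx, hx⟩ y hy)⟩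

lemma isChainComponent_of_forall_setOf_chainReach_eq {M : Set X} (hM : M.Nonempty)
    (h : ∀ p ∈ M, {y | ChainReach F p y} = M) : IsChainComponent F M := by
  obtain ⟨x, hx⟩ := hM
  have reach : ∀ p ∈ M, ∀ q ∈ M, ChainReach F p q := fun p hp q hq => (h p hp).ge hq
  refine ⟨x, reach x hx x hx, Subset.antisymm (fun p hp => ?_) (fun y hy => (h x hx).le hy.2.1)⟩
  exact ⟨reach p hp p hp, reach x hx p hp, reach p hp x hx⟩

/-- A minimal nonempty closed chain stable subset is the chain-forward set of each of its points,
hence a chain component. -/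
lemma exists_chainComponent_subset [CompactSpace X] {K : Set X} (hKne : K.Nonempty)
    (hKcl : IsClosed K) (hKst : ChainStable F K) :
    ∃ D, IsChainComponent F D ∧ ChainStable F D ∧ D ⊆ K := by
  let S : Set (Set X) := {s | s.Nonempty ∧ IsClosed s ∧ ChainStable F s ∧ s ⊆ K}
  obtain ⟨M, ⟨hMne, -, hMst, hMK⟩, hMmin⟩ := zorn_superset S fun c hcS hchain => by
    rcases c.eq_empty_or_nonempty with rfl | hcne
    · exact ⟨K, ⟨hKne, hKcl, hKst, Subset.rfl⟩, by simp⟩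
    have : Nonempty c := hcne.to_subtype
    refine ⟨⋂₀ c, ⟨?_, isClosed_sInter fun s hs => (hcS hs).2.1, ?_, ?_⟩,
      fun s hs => sInter_subset_of_mem hs⟩
    · exact IsCompact.nonempty_sInter_of_directed_nonempty_isCompact_isClosed
        (fun s hs t ht => (hchain.total hs ht).elim (fun h => ⟨s, hs, Subset.rfl, h⟩)
          (fun h => ⟨t, ht, h, Subset.rfl⟩))
        (fun s hs => (hcS hs).1) (fun s hs => (hcS hs).2.1.isCompact) (fun s hs => (hcS hs).2.1)
    · exact fun x hx y hy => mem_sInter.mpr fun s hs => (hcS hs).2.2.1 x (hx s hs) y hy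
    · obtain ⟨s, hs⟩ := hcne
      exact (sInter_subset_of_mem hs).trans (hcS hs).2.2.2
  have hforward : ∀ p ∈ M, {y | ChainReach F p y} = M := fun p hp =>
    have hsub : {y | ChainReach F p y} ⊆ M := fun y hy => hMst p hp y hy
    hsub.antisymm (hMmin ⟨⟨F p, chainReach_apply⟩, isClosed_setOf_chainReach F p,
      chainStable_setOf_chainReach F p, hsub.trans hMK⟩ hsub)
  exact ⟨M, isChainComponent_of_forall_setOf_chainReach_eq hMne hforward, hMst, hMK⟩

end Chains

section TrappingRegion

variable [TopologicalSpace X] {F : X → X} {V : Set X}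

def IsTrappingRegion (F : X → X) (V : Set X) : Prop := IsOpen V ∧ F '' closure V ⊆ V

variable (F) in
def attractorOf (V : Set X) : Set X := ⋂ n : ℕ, F^[n] '' closure V

lemma IsTrappingRegion.attractorOf_subset_image_iterate (hV : IsTrappingRegion F V) (n : ℕ) :
    attractorOf F V ⊆ F^[n] '' V := by
  refine (iInter_subset _ (n + 1)).trans ?_
  rw [Function.iterate_succ, image_comp]
  exact image_mono hV.2

lemma IsTrappingRegion.attractorOf_subset (hV : IsTrappingRegion F V) : attractorOf F V ⊆ V := by
  simpa using hV.attractorOf_subset_image_iterate 0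

variable (f : X ≃ₜ X)

lemma IsTrappingRegion.image_iterate (hV : IsTrappingRegion f V) (n : ℕ) :
    IsTrappingRegion f (f^[n] '' V) := by
  induction n with
  | zero => simpa using hV
  | succ n ih =>
    rw [Function.iterate_succ', image_comp]
    refine ⟨f.isOpenMap _ ih.1, ?_⟩
    rw [← f.image_closure]
    exact image_mono ih.2

lemma mem_attractorOf_of_iterate_mem {n : ℕ} {w : X} (h : f^[n] w ∈ attractorOf f V) :
    w ∈ attractorOf f V := by
  refine mem_iInter.mpr fun j => ?_
  have := mem_iInter.mp h (n + j)
  rwa [Function.iterate_add, image_comp, (f.injective.iterate n).mem_set_image] at this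

lemma iterate_symm_iterate_of_le {i m : ℕ} (h : i ≤ m) (x : X) :
    f^[i] (f.symm^[m] x) = f.symm^[m - i] x := by
  rw [← Nat.add_sub_cancel' h, Function.iterate_add_apply, Nat.add_sub_cancel_left]
  exact (Function.RightInverse.iterate (fun y => f.apply_symm_apply y) i) _

lemma exists_symm_iterate_notMem_image {x : X} (hxV : x ∈ V) (hxA : x ∉ attractorOf f V) :
    ∃ m, (∀ j ≤ m, f.symm^[j] x ∈ V) ∧ f.symm^[m] x ∉ f '' V := by
  have hex : ∃ m, f.symm^[m + 1] x ∉ V := by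
    by_contra! h
    refine hxA (mem_iInter.mpr fun n => ⟨f.symm^[n] x, subset_closure ?_,
      (Function.RightInverse.iterate (fun y => f.apply_symm_apply y) n) x⟩)
    cases n with
    | zero => exact hxV
    | succ n => exact h n
  classical
  refine ⟨Nat.find hex, fun j hj => ?_, fun ⟨v, hv, hfv⟩ => Nat.find_spec hex ?_⟩
  · cases j with
    | zero => exact hxV
    | succ j => exact not_not.mp (Nat.find_min hex (by omega))
  · rwa [Function.iterate_succ_apply', ← hfv, f.symm_apply_apply]

variable [CompactSpace X]

lemma isCompact_image_iterate_closure (hF : Continuous F) (n : ℕ) :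
    IsCompact (F^[n] '' closure V) :=
  isClosed_closure.isCompact.image (hF.iterate n)

lemma isClosed_attractorOf [T2Space X] (hF : Continuous F) : IsClosed (attractorOf F V) :=
  isClosed_iInter fun n => (isCompact_image_iterate_closure hF n).isClosed

lemma IsTrappingRegion.attractorOf_nonempty [T2Space X] (hF : Continuous F)
    (hV : IsTrappingRegion F V) (hne : V.Nonempty) : (attractorOf F V).Nonempty := by
  refine IsCompact.nonempty_iInter_of_sequence_nonempty_isCompact_isClosed _ (fun n => ?_)
    (fun n => hne.closure.image _) (isCompact_image_iterate_closure hF 0)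
    (fun n => (isCompact_image_iterate_closure hF n).isClosed)
  rw [Function.iterate_succ, image_comp]
  exact image_mono (hV.2.trans subset_closure)

end TrappingRegion

section Attractor

variable [MetricSpace X] [CompactSpace X] {F : X → X} {V : Set X}

lemma IsTrappingRegion.exists_forall_chain_mem (hF : Continuous F) (hV : IsTrappingRegion F V) :
    ∃ η > 0, ∀ (k : ℕ) (c : ℕ → X), c 0 ∈ closure V → IsDeltaChain F η k c →
      ∀ i ≤ k, 0 < i → c i ∈ V := by
  obtain ⟨η, hη, hsub⟩ :=
    (isCompact_image_iterate_closure hF 1).exists_cthickening_subset_open hV.1 hV.2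
  refine ⟨η, hη, fun k c h0 hc i => ?_⟩
  induction i with
  | zero => exact fun _ h => absurd h (lt_irrefl 0)
  | succ i ih =>
    intro hik _
    have hci : c i ∈ closure V := by
      rcases Nat.eq_zero_or_pos i with rfl | hi
      · exact h0
      · exact subset_closure (ih (by omega) hi)
    exact hsub (mem_cthickening_of_dist_le _ _ η _ (mem_image_of_mem F hci)
      (by rw [dist_comm]; exact hc i (by omega)))

lemma IsTrappingRegion.mem_of_chainReach (hF : Continuous F) (hV : IsTrappingRegion F V)
    {x y : X} (hx : x ∈ closure V) (hxy : ChainReach F x y) : y ∈ V := by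
  obtain ⟨η, hη, hchain⟩ := hV.exists_forall_chain_mem hF
  obtain ⟨k, hk, c, hc0, rfl, hc⟩ := hxy η hη
  exact hchain k c (hc0 ▸ hx) hc k le_rfl hk

lemma exists_deltaReachSet_subset (x : X) {O : Set X} (hO : IsOpen O)
    (hxO : {y | ChainReach F x y} ⊆ O) : ∃ δ > 0, deltaReachSet F δ x ⊆ O := by
  by_contra! h
  let Z : ℕ → Set X := fun n => closure (deltaReachSet F (1 / (n + 1)) x) \ O
  obtain ⟨y, hy⟩ : (⋂ n, Z n).Nonempty := by
    refine IsCompact.nonempty_iInter_of_sequence_nonempty_isCompact_isClosed Z (fun n => ?_)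
      (fun n => ?_) (isClosed_closure.sdiff hO).isCompact (fun n => isClosed_closure.sdiff hO)
    · refine sdiff_subset_sdiff_left (closure_mono (deltaReachSet_mono ?_))
      exact one_div_le_one_div_of_le (by positivity) (by push_cast; linarith)
    · obtain ⟨y, hy, hyO⟩ := not_subset.mp (h _ Nat.one_div_pos_of_nat)
      exact ⟨y, subset_closure hy, hyO⟩
  rw [mem_iInter] at hy
  refine (hy 0).2 (hxO fun δ hδ => ?_)
  obtain ⟨n, hn⟩ := exists_nat_one_div_lt hδ
  exact closure_deltaReachSet_subset hn (hy n).1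

lemma exists_isTrappingRegion_subset (x : X) {O : Set X} (hO : IsOpen O)
    (hxO : {y | ChainReach F x y} ⊆ O) : ∃ V, IsTrappingRegion F V ∧ V.Nonempty ∧ V ⊆ O := by
  obtain ⟨δ, hδ, hδO⟩ := exists_deltaReachSet_subset x hO hxO
  set R := deltaReachSet F δ x
  have hclosure : closure (thickening (δ / 2) (F '' R)) ⊆ R :=
    (closure_thickening_subset_cthickening _ _).trans <|
      (cthickening_subset_thickening' hδ (half_lt_self hδ) _).trans
        thickening_image_deltaReachSet_subset
  refine ⟨thickening (δ / 2) (F '' R), ⟨isOpen_thickening, ?_⟩, ?_,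
    subset_closure.trans (hclosure.trans hδO)⟩
  · exact (image_mono hclosure).trans (self_subset_thickening (half_pos hδ) _)
  · exact ⟨_, self_subset_thickening (half_pos hδ) _
      (mem_image_of_mem F (apply_mem_deltaReachSet hδ.le))⟩

variable (f : X ≃ₜ X)

lemma chainStable_attractorOf (hV : IsTrappingRegion f V) : ChainStable f (attractorOf f V) :=
  fun _ hx _ hxy => mem_iInter.mpr fun n => image_mono subset_closure <|
    (hV.image_iterate f n).mem_of_chainReach f.continuous
      (subset_closure (hV.attractorOf_subset_image_iterate n hx)) hxy

/-- Prefix the backward orbit of `c 0` given by `exists_symm_iterate_notMem_image` to the chain and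
shadow: the shadowing orbit starts `γ`-close to a point outside `f '' V ⊇ cthickening γ A`, so it
starts, and hence stays, outside `A`. -/
lemma exists_notMem_attractorOf_near_chain_end {S : Set X} (hV : IsTrappingRegion f V)
    (hVS : V ⊆ S) (hsh : ShadowsOn f S) {ε : ℝ} (hε : 0 < ε) :
    ∃ δ > 0, ∀ (k : ℕ) (c : ℕ → X), (∀ i ≤ k, c i ∈ V) → c 0 ∉ attractorOf f V →
      IsDeltaChain f δ k c → ∃ w ∉ attractorOf f V, dist (c k) w ≤ ε := by
  obtain ⟨γ, hγ, hγA⟩ :=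
    (isClosed_attractorOf f.continuous).isCompact.exists_cthickening_subset_open
      (f.isOpenMap _ hV.1) (by simpa using hV.attractorOf_subset_image_iterate 1)
  obtain ⟨δ, hδ, hshadow⟩ := hsh (min ε γ) (lt_min hε hγ)
  refine ⟨δ, hδ, fun k c hcV hc0 hc => ?_⟩
  obtain ⟨m, horbit, hexit⟩ := exists_symm_iterate_notMem_image f (hcV 0 (Nat.zero_le _)) hc0
  set p := f.symm^[m] (c 0)
  have hjoin : f^[m] p = c 0 := by simpa using iterate_symm_iterate_of_le f le_rfl (c 0)
  set e := chainAppend m (fun i => f^[i] p) c with he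
  have heS : ∀ i ≤ m + k, e i ∈ S := by
    intro i hi
    rcases le_total i m with him | hmi
    · rw [he, chainAppend_of_le him, iterate_symm_iterate_of_le f him]
      exact hVS (horbit _ (Nat.sub_le _ _))
    · rw [he, chainAppend_of_ge hjoin hmi]
      exact hVS (hcV _ (by omega))
  obtain ⟨w, hw⟩ := hshadow (m + k) e heS ((isDeltaChain_iterate hδ.le m p).append hc hjoin)
  have hwA : w ∉ attractorOf f V := fun hwA => hexit <| hγA <|
    mem_cthickening_of_dist_le _ w _ _ hwA <| by
      simpa [e, chainAppend_of_le (Nat.zero_le m)] using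
        (hw 0 (Nat.zero_le _)).trans (min_le_right _ _)
  refine ⟨f^[m + k] w, fun h => hwA (mem_attractorOf_of_iterate_mem f h), ?_⟩
  have hek : e (m + k) = c k := by
    rw [he, chainAppend_of_ge hjoin (by omega), Nat.add_sub_cancel_left]
  exact hek ▸ (hw (m + k) le_rfl).trans (min_le_left _ _)

theorem chainStable_frontier_attractorOf {S : Set X} (hV : IsTrappingRegion f V) (hVS : V ⊆ S)
    (hsh : ShadowsOn f S) : ChainStable f (frontier (attractorOf f V)) := by
  have hAcl : IsClosed (attractorOf f V) := isClosed_attractorOf f.continuous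
  obtain ⟨η, hη, hstay⟩ := hV.exists_forall_chain_mem f.continuous
  intro x hx y hxy
  rw [frontier_eq_closure_inter_closure] at hx ⊢
  have hxA : x ∈ attractorOf f V := hAcl.closure_eq ▸ hx.1
  refine ⟨subset_closure (chainStable_attractorOf f hV x hxA y hxy),
    Metric.mem_closure_iff.mpr fun ε hε => ?_⟩
  obtain ⟨δ, hδ, hnear⟩ := exists_notMem_attractorOf_near_chain_end f hV hVS hsh (half_pos hε)
  obtain ⟨k, hk, c, hc0, rfl, hc⟩ := hxy (min (δ / 2) η) (by positivity)
  have hnhds : V ∩ f ⁻¹' ball (f x) (δ / 2) ∈ 𝓝 x :=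
    inter_mem (hV.1.mem_nhds (hV.attractorOf_subset hxA))
      (f.continuous.continuousAt.preimage_mem_nhds (ball_mem_nhds _ (half_pos hδ)))
  obtain ⟨x', ⟨hx'V, hx'x⟩, hx'A⟩ := mem_closure_iff_nhds.mp hx.2 _ hnhds
  have hc' : IsDeltaChain f δ k (Function.update c 0 x') :=
    (hc.update_zero (δ' := δ / 2) (by rw [hc0]; exact (mem_ball.mp hx'x).le)).mono
      (by linarith [min_le_left (δ / 2) η])
  have hc'V : ∀ i ≤ k, Function.update c 0 x' i ∈ V := by
    intro i hi
    rcases Nat.eq_zero_or_pos i with rfl | hi0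
    · simpa using hx'V
    · rw [Function.update_of_ne hi0.ne']
      exact hstay k c (hc0 ▸ subset_closure (hV.attractorOf_subset hxA))
        (hc.mono (min_le_right _ _)) i hi hi0
  obtain ⟨w, hwA, hw⟩ := hnear k _ hc'V (by simpa using hx'A) hc'
  rw [Function.update_of_ne (by omega)] at hw
  exact ⟨w, hwA, by linarith⟩

end Attractor

theorem stmt15 [MetricSpace X] [CompactSpace X] [ConnectedSpace X] (f : X ≃ₜ X)
    (C : Set X) (hC : IsChainComponent (⇑f) C) (hter : ChainStable (⇑f) C)
    (hne : C ≠ Set.univ)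
    (b : ℝ) (hb : 0 < b) (hsh : ShadowsOn (⇑f) (Nbhd b C)) :
    ∀ a > 0, ∃ D : Set X, IsChainComponent (⇑f) D ∧ ChainStable (⇑f) D ∧
      interior D = ∅ ∧ D ⊆ Nbhd a C := by
  intro a ha
  obtain ⟨x₀, hCx₀⟩ := hC.eq_setOf_chainReach hter
  have hCcl : IsClosed C := hCx₀ ▸ isClosed_setOf_chainReach f x₀
  have hCne : C.Nonempty := ⟨f x₀, hCx₀ ▸ chainReach_apply⟩
  obtain ⟨z, hz⟩ := (ne_univ_iff_exists_notMem C).mp hne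
  have hzC : 0 < infDist z C := (hCcl.notMem_iff_infDist_pos hCne).mp hz
  set r := min (min a b) (infDist z C / 2)
  have hr : 0 < r := by positivity
  have hCO : {y | ChainReach f x₀ y} ⊆ {w | infDist w C < r} := fun y hy => by
    show infDist y C < r
    rwa [infDist_zero_of_mem (hCx₀ ▸ hy)]
  obtain ⟨V, hV, hVne, hVO⟩ :=
    exists_isTrappingRegion_subset x₀ (isOpen_lt (continuous_infDist_pt C) continuous_const) hCO
  have hVNbhd : ∀ s ≥ r, V ⊆ Nbhd s C := fun s hs w hw => (hVO hw).le.trans hs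
  set A := attractorOf f V
  have hAcl : IsClosed A := isClosed_attractorOf f.continuous
  have hzA : z ∉ A := fun hzA => by
    have : infDist z C ≤ r := hVNbhd r le_rfl (hV.attractorOf_subset hzA)
    linarith [min_le_right (min a b) (infDist z C / 2)]
  have hfrontier : (frontier A).Nonempty := nonempty_frontier_iff.mpr
    ⟨hV.attractorOf_nonempty f.continuous hVne, (ne_univ_iff_exists_notMem A).mpr ⟨z, hzA⟩⟩
  obtain ⟨D, hD, hDst, hDA⟩ := exists_chainComponent_subset hfrontier isClosed_frontier
    (chainStable_frontier_attractorOf f hV (hVNbhd b (by simp [r])) hsh)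
  refine ⟨D, hD, hDst, subset_empty_iff.mp ((interior_mono hDA).trans (interior_frontier hAcl).le),
    hDA.trans (hAcl.frontier_subset.trans (hV.attractorOf_subset.trans (hVNbhd a (by simp [r]))))⟩
end

section
/- Let f : X → X be a homeomorphism of a compact metric space and C a chain component that is both initial and terminal and not clopen in X. Then for every a > 0 there exist a terminal chain component D ≠ C and an initial chain component E ≠ C with D ∪ E ⊆ B_a(C). -/
open Metric Filter Topology Set

variable {X : Type*}

/-!
Points close to a terminal chain component `C` can only chain-reach points close to `C`, by
compactness and closedness of the chain relation. Since `C` is closed but not open, there are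
points `x ∉ C` arbitrarily close to `C`; some terminal chain component `D` is chain-reachable
from `x`, and `D ≠ C` because `C` is initial. The initial components arise in the same way from
`f⁻¹`, which reverses the chain relation.
-/

section ChainRelation

variable [MetricSpace X] {g : X → X} {δ ε η : ℝ} {k : ℕ} {c c' : ℕ → X}

theorem IsDeltaChain.mono_s16 (hc : IsDeltaChain g δ k c) (hδε : δ ≤ ε) :
    IsDeltaChain g ε k c :=
  fun i hi => (hc i hi).trans hδε

theorem IsDeltaChain.append_s16 {k' : ℕ} (hc : IsDeltaChain g δ k c) (hc' : IsDeltaChain g δ k' c')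
    (hjoin : c k = c' 0) :
    IsDeltaChain g δ (k + k') (fun i => if i ≤ k then c i else c' (i - k)) := by
  intro i hi
  by_cases hik : i < k
  · simpa only [if_pos hik.le, if_pos (Nat.succ_le_of_lt hik)] using hc i hik
  · have hci : (if i ≤ k then c i else c' (i - k)) = c' (i - k) := by
      split_ifs with h
      · rw [show i = k by omega, hjoin, Nat.sub_self]
      · rfl
    simp only [hci, if_neg (show ¬ i + 1 ≤ k by omega), show i + 1 - k = i - k + 1 by omega]
    exact hc' (i - k) (by omega)

theorem IsDeltaChain.of_dist_lt {ε' : ℝ} (hc : IsDeltaChain g ε k c)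
    (hcc' : ∀ j ≤ k, dist (c j) (c' j) < η)
    (hgη : ∀ u v, dist u v < η → dist (g u) (g v) ≤ ε') :
    IsDeltaChain g (ε' + ε + η) k c' := by
  intro i hi
  calc dist (g (c' i)) (c' (i + 1))
      ≤ dist (g (c' i)) (g (c i)) + dist (g (c i)) (c (i + 1)) + dist (c (i + 1)) (c' (i + 1)) :=
        dist_triangle4 _ _ _ _
    _ ≤ ε' + ε + η := by
        gcongr
        · exact hgη _ _ (by rw [dist_comm]; exact hcc' i hi.le)
        · exact hc i hi
        · exact (hcc' (i + 1) hi).le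

theorem chainReach_trans {x y z : X} (hxy : ChainReach g x y) (hyz : ChainReach g y z) :
    ChainReach g x z := by
  intro δ hδ
  obtain ⟨k, hk, c, hc0, hck, hc⟩ := hxy δ hδ
  obtain ⟨k', hk', c', hc'0, hc'k, hc'⟩ := hyz δ hδ
  refine ⟨k + k', by omega, _, by simpa using hc0, ?_, hc.append_s16 hc' (hck.trans hc'0.symm)⟩
  simpa [show k' ≠ 0 by omega] using hc'k

theorem chainReach_apply_s16 (x : X) : ChainReach g x (g x) :=
  fun δ hδ => ⟨1, le_rfl, fun i => g^[i] x, rfl, rfl, fun i _ => by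
    rw [← Function.iterate_succ_apply' g i x, dist_self]; exact hδ.le⟩

variable [CompactSpace X]

theorem isClosed_setOf_chainReach_s16 (hg : Continuous g) :
    IsClosed {p : X × X | ChainReach g p.1 p.2} := by
  refine isClosed_of_closure_subset fun p hp δ hδ => ?_
  obtain ⟨η, hη, hgη⟩ := Metric.uniformContinuous_iff.mp
    (CompactSpace.uniformContinuous_of_continuous hg) (δ / 3) (by positivity)
  obtain ⟨q, hq, hpq⟩ := Metric.mem_closure_iff.mp hp (min η (δ / 3)) (by positivity)
  obtain ⟨k, hk, c, hc0, hck, hc⟩ := hq (δ / 3) (by positivity)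
  have hpq₁ : dist q.1 p.1 < min η (δ / 3) := by
    rw [dist_comm]; exact (le_max_left _ _).trans_lt hpq
  have hpq₂ : dist q.2 p.2 < min η (δ / 3) := by
    rw [dist_comm]; exact (le_max_right _ _).trans_lt hpq
  refine ⟨k, hk, Function.update (Function.update c 0 p.1) k p.2,
    by simp [show 0 ≠ k by omega], by simp, ?_⟩
  refine (hc.of_dist_lt (η := min η (δ / 3)) (ε' := δ / 3) (fun j _ => ?_)
    fun u v huv => (hgη (huv.trans_le (min_le_left _ _))).le).mono_s16 ?_
  · simp only [Function.update_apply]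
    split_ifs with hjk hj0
    · rwa [hjk, hck]
    · rwa [hj0, hc0]
    · rw [dist_self]; positivity
  · linarith [min_le_right η (δ / 3)]

theorem IsChainComponent.isClosed (hg : Continuous g) {C : Set X} (hC : IsChainComponent g C) :
    IsClosed C := by
  obtain ⟨x, -, rfl⟩ := hC
  have hR := isClosed_setOf_chainReach_s16 hg
  exact (hR.preimage (continuous_id.prodMk continuous_id)).inter
    ((hR.preimage (continuous_const.prodMk continuous_id)).inter
      (hR.preimage (continuous_id.prodMk continuous_const)))

end ChainRelation

section Reversal

variable [MetricSpace X] [CompactSpace X] (f : X ≃ₜ X)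

theorem chainReach_of_chainReach_symm {x y : X} (h : ChainReach f.symm x y) :
    ChainReach f y x := by
  intro δ hδ
  obtain ⟨η, hη, hfη⟩ := Metric.uniformContinuous_iff.mp
    (CompactSpace.uniformContinuous_of_continuous f.continuous) δ hδ
  obtain ⟨k, hk, c, hc0, hck, hc⟩ := h (η / 2) (by positivity)
  refine ⟨k, hk, fun i => c (k - i), by simpa using hck, by simpa using hc0, fun i hi => ?_⟩
  have := hfη ((hc (k - (i + 1)) (by omega)).trans_lt (half_lt_self hη))
  rw [f.apply_symm_apply, show k - (i + 1) + 1 = k - i by omega, dist_comm] at this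
  exact this.le

theorem chainReach_symm_iff {x y : X} : ChainReach f.symm x y ↔ ChainReach f y x :=
  ⟨chainReach_of_chainReach_symm f, fun h =>
    chainReach_of_chainReach_symm f.symm (by rwa [Homeomorph.symm_symm])⟩

theorem isChainComponent_symm_iff {C : Set X} :
    IsChainComponent f.symm C ↔ IsChainComponent f C := by
  simp only [IsChainComponent, chainReach_symm_iff, and_comm]

theorem chainStable_symm_iff {S : Set X} : ChainStable f.symm S ↔ InitialStable f S := by
  simp only [ChainStable, InitialStable, chainReach_symm_iff]

theorem initialStable_symm_iff {S : Set X} : InitialStable f.symm S ↔ ChainStable f S := by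
  simp only [ChainStable, InitialStable, chainReach_symm_iff]

end Reversal

section Terminal

variable [MetricSpace X] [CompactSpace X] {g : X → X}

theorem ChainStable.exists_chainReach_infDist_lt (hg : Continuous g) {S : Set X}
    (hS : ChainStable g S) (hSc : IsClosed S) {a : ℝ} (ha : 0 < a) :
    ∃ b > 0, ∀ x ∈ thickening b S, ∀ y, ChainReach g x y → infDist y S < a := by
  set K := Prod.fst '' {p : X × X | ChainReach g p.1 p.2 ∧ a ≤ infDist p.2 S}
  have hK : IsCompact K :=
    ((isClosed_setOf_chainReach_s16 hg).inter (isClosed_le continuous_const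
      ((continuous_infDist_pt S).comp continuous_snd))).isCompact.image continuous_fst
  have hKS : Disjoint K S := by
    rw [disjoint_left]
    rintro _ ⟨p, ⟨hp, hpa⟩, rfl⟩ hp₁
    rw [infDist_zero_of_mem (hS _ hp₁ _ hp)] at hpa
    linarith
  obtain ⟨b, hb, hdisj⟩ := hKS.exists_thickenings hK hSc
  exact ⟨b, hb, fun x hx y hxy => not_le.mp fun hya =>
    hdisj.ne_of_mem (self_subset_thickening hb K ⟨(x, y), ⟨hxy, hya⟩, rfl⟩) hx rfl⟩

theorem exists_chainComponent_chainStable_of_chainReach (hg : Continuous g) (x : X) :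
    ∃ T, IsChainComponent g T ∧ ChainStable g T ∧ T.Nonempty ∧
      ∀ y ∈ T, ChainReach g x y := by
  set A := {S : Set X | S.Nonempty ∧ IsClosed S ∧ ChainStable g S}
  have hreach_mem : ∀ y, {z | ChainReach g y z} ∈ A := fun y =>
    ⟨⟨g y, chainReach_apply_s16 y⟩,
      (isClosed_setOf_chainReach_s16 hg).preimage (continuous_const.prodMk continuous_id),
      fun _ hu _ huv => chainReach_trans hu huv⟩
  have hchain : ∀ c ⊆ A, IsChain (· ⊆ ·) c → c.Nonempty →
      ∃ lb ∈ A, ∀ s ∈ c, lb ⊆ s := by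
    intro c hcA hc hcne
    have : Nonempty c := hcne.to_subtype
    have hdir : DirectedOn (· ⊇ ·) c := fun s hs t ht =>
      (hc.total hs ht).elim (fun h => ⟨s, hs, subset_rfl, h⟩)
        (fun h => ⟨t, ht, h, subset_rfl⟩)
    refine ⟨⋂₀ c, ⟨?_, isClosed_sInter fun s hs => (hcA hs).2.1, ?_⟩,
      fun s => sInter_subset_of_mem⟩
    · exact IsCompact.nonempty_sInter_of_directed_nonempty_isCompact_isClosed hdir
        (fun s hs => (hcA hs).1) (fun s hs => (hcA hs).2.1.isCompact) (fun s hs => (hcA hs).2.1)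
    · exact fun u hu v huv => mem_sInter.mpr fun s hs => (hcA hs).2.2 u (hu s hs) v huv
  obtain ⟨T, hxT, hT⟩ := zorn_superset_nonempty A hchain _ (hreach_mem x)
  obtain ⟨⟨y₀, hy₀⟩, -, hTs⟩ := hT.prop
  -- by minimality, `T` is the set of points chain-reachable from any of its points
  have hTT : ∀ y ∈ T, ∀ z ∈ T, ChainReach g y z := fun y hy =>
    hT.2 (hreach_mem y) fun z hz => hTs y hy z hz
  refine ⟨T, ⟨y₀, hTT y₀ hy₀ y₀ hy₀, ?_⟩, hTs, ⟨y₀, hy₀⟩, hxT⟩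
  ext y
  exact ⟨fun hy => ⟨hTT y hy y hy, hTT y₀ hy₀ y hy, hTT y hy y₀ hy₀⟩,
    fun hy => hTs y₀ hy₀ y hy.2.1⟩

theorem exists_chainComponent_chainStable_ne_subset_nbhd (hg : Continuous g) {S : Set X}
    (hSc : IsClosed S) (hS : ChainStable g S) (hSi : InitialStable g S) (hSo : ¬ IsOpen S)
    {a : ℝ} (ha : 0 < a) :
    ∃ D, IsChainComponent g D ∧ ChainStable g D ∧ D ≠ S ∧ D ⊆ Nbhd a S := by
  obtain ⟨b, hb, hnear⟩ := hS.exists_chainReach_infDist_lt hg hSc ha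
  obtain ⟨x, hxb, hxS⟩ : ∃ x ∈ thickening b S, x ∉ S := not_subset.mp fun h =>
    hSo (h.antisymm (self_subset_thickening hb S) ▸ isOpen_thickening)
  obtain ⟨D, hD, hDs, ⟨y, hy⟩, hxD⟩ := exists_chainComponent_chainStable_of_chainReach hg x
  refine ⟨D, hD, hDs, ?_, fun z hz => (hnear x hxb z (hxD z hz)).le⟩
  rintro rfl
  exact hxS (hSi y hy x (hxD y hy))

end Terminal

theorem stmt16 [MetricSpace X] [CompactSpace X] (f : X ≃ₜ X)
    (C : Set X) (hC : IsChainComponent (⇑f) C)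
    (hter : ChainStable (⇑f) C) (hini : InitialStable (⇑f) C)
    (hnc : ¬ IsClopen C) :
    ∀ a > 0, ∃ D E : Set X,
      IsChainComponent (⇑f) D ∧ ChainStable (⇑f) D ∧ D ≠ C ∧
      IsChainComponent (⇑f) E ∧ InitialStable (⇑f) E ∧ E ≠ C ∧
      D ∪ E ⊆ Nbhd a C := by
  intro a ha
  have hCc : IsClosed C := hC.isClosed f.continuous
  have hCo : ¬ IsOpen C := fun h => hnc ⟨hCc, h⟩
  obtain ⟨D, hD, hDs, hDC, hDa⟩ :=
    exists_chainComponent_chainStable_ne_subset_nbhd f.continuous hCc hter hini hCo ha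
  obtain ⟨E, hE, hEs, hEC, hEa⟩ := exists_chainComponent_chainStable_ne_subset_nbhd
    f.symm.continuous hCc ((chainStable_symm_iff f).mpr hini) ((initialStable_symm_iff f).mpr hter)
    hCo ha
  exact ⟨D, E, hD, hDs, hDC, (isChainComponent_symm_iff f).mp hE, (chainStable_symm_iff f).mp hEs,
    hEC, union_subset hDa hEa⟩
end
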